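/- arXiv:2106.11628 — 3 statements merged into one kernel-verified Lean document; each statement's English description precedes it below -/
import Mathlib

section
/- For any infinite word x and any finite word c, the exponents of repetition satisfy rep(c x) = rep(x), where c x denotes the concatenation of c and x. -/
/-- `rFn x n` : the length of the smallest prefix of the infinite word `x`
(indexed from 1) in which some factor of length `n` occurs twice. -/
noncomputable def rFn {α : Type*} (x : ℕ → α) (n : ℕ) : ℕ :=
  sInf {m | ∃ j, 1 ≤ j ∧ j + n ≤ m ∧ ∀ i < n, x (j + i) = x (m - n + 1 + i)}

/-- The exponent of repetition `rep x = liminf r(n,x)/n`. -/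
noncomputable def repE {α : Type*} (x : ℕ → α) : ℝ :=
  Filter.liminf (fun n => (rFn x n : ℝ) / n) Filter.atTop

/-- The concatenation of a finite word `c` with the infinite word `x`
(both indexed from 1). -/
def prepend {α : Type*} (c : List α) (x : ℕ → α) : ℕ → α :=
  fun i => if h : i - 1 < c.length then c.get ⟨i - 1, h⟩ else x (i - c.length)

namespace RepAux

def rSet {α : Type*} (x : ℕ → α) (n : ℕ) : Set ℕ :=
  {m | ∃ j, 1 ≤ j ∧ j + n ≤ m ∧ ∀ i < n, x (j + i) = x (m - n + 1 + i)}

lemma rFn_eq {α : Type*} (x : ℕ → α) (n : ℕ) : rFn x n = sInf (rSet x n) := rfl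

lemma rSet_nonempty {α : Type*} [Finite α] (x : ℕ → α) (n : ℕ) :
    (rSet x n).Nonempty := by
  obtain ⟨a, b, hab, hfab⟩ := Finite.exists_ne_map_eq_of_infinite
    (fun j : ℕ => fun i : Fin n => x (j + 1 + i))
  rcases hab.lt_or_gt with h | h
  · refine ⟨b + n, a + 1, by omega, by omega, fun i hi => ?_⟩
    have := congrFun hfab ⟨i, hi⟩
    simpa [show b + n - n + 1 + i = b + 1 + i by omega] using this
  · refine ⟨a + n, b + 1, by omega, by omega, fun i hi => ?_⟩
    have := congrFun hfab ⟨i, hi⟩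
    simpa [show a + n - n + 1 + i = a + 1 + i by omega] using this.symm

lemma mem_rSet_ge {α : Type*} {x : ℕ → α} {n m : ℕ} (h : m ∈ rSet x n) :
    n + 1 ≤ m := by
  obtain ⟨j, h1, h2, _⟩ := h; omega

lemma rFn_ge {α : Type*} [Finite α] (x : ℕ → α) (n : ℕ) : n + 1 ≤ rFn x n :=
  mem_rSet_ge (Nat.sInf_mem (rSet_nonempty x n))

lemma prepend_of_gt {α : Type*} (c : List α) (x : ℕ → α) {k : ℕ}
    (h : c.length < k) : prepend c x k = x (k - c.length) := by
  unfold prepend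
  rw [dif_neg (by omega)]

lemma rFn_prepend_le {α : Type*} [Finite α] (c : List α) (x : ℕ → α) (n : ℕ) :
    rFn (prepend c x) n ≤ rFn x n + c.length := by
  set L := c.length
  have hm : rFn x n ∈ rSet x n := Nat.sInf_mem (rSet_nonempty x n)
  set m := rFn x n with hmdef
  obtain ⟨j, hj1, hjn, hfac⟩ := hm
  rw [rFn_eq]
  apply Nat.sInf_le
  refine ⟨j + L, by omega, by omega, fun i hi => ?_⟩
  have e1 : prepend c x (j + L + i) = x (j + i) := by
    rw [prepend_of_gt c x (by omega : L < j + L + i)]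
    congr 1; omega
  have e2 : prepend c x (m + L - n + 1 + i) = x (m - n + 1 + i) := by
    rw [prepend_of_gt c x (by omega : L < m + L - n + 1 + i)]
    congr 1; omega
  rw [e1, e2]
  exact hfac i hi

lemma rFn_prepend_ge {α : Type*} [Finite α] (c : List α) (x : ℕ → α) (n : ℕ)
    (hLn : c.length ≤ n) :
    rFn x (n - c.length) + c.length ≤ rFn (prepend c x) n := by
  set L := c.length
  have hm : rFn (prepend c x) n ∈ rSet (prepend c x) n :=
    Nat.sInf_mem (rSet_nonempty (prepend c x) n)
  set m := rFn (prepend c x) n with hmdef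
  obtain ⟨j, hj1, hjn, hfac⟩ := hm
  have hmem : m - L ∈ rSet x (n - L) := by
    refine ⟨j, hj1, by omega, fun i hi => ?_⟩
    have h1 := hfac (L + i) (by omega)
    have e1 : prepend c x (j + (L + i)) = x (j + i) := by
      rw [prepend_of_gt c x (by omega : L < j + (L + i))]
      congr 1; omega
    have e2 : prepend c x (m - n + 1 + (L + i)) = x (m - L - (n - L) + 1 + i) := by
      rw [prepend_of_gt c x (by omega : L < m - n + 1 + (L + i))]
      congr 1; omega
    rw [e1, e2] at h1
    exact h1
  have := Nat.sInf_le hmem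
  rw [rFn_eq]
  omega

lemma sSup_eq_of_close {A B : Set ℝ} (hA : A.Nonempty) (hB : B.Nonempty)
    (hAB : ∀ a ∈ A, ∀ ε > 0, a - ε ∈ B) (hBA : ∀ a ∈ B, ∀ ε > 0, a - ε ∈ A) :
    sSup A = sSup B := by
  by_cases h : BddAbove A
  · have hB' : BddAbove B := by
      obtain ⟨M, hM⟩ := h
      refine ⟨M + 1, fun b hb => ?_⟩
      have := hM (hBA b hb 1 one_pos)
      linarith
    have h' : BddAbove A := h
    have key : ∀ (S T : Set ℝ), S.Nonempty → BddAbove T →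
        (∀ a ∈ S, ∀ ε > 0, a - ε ∈ T) → sSup S ≤ sSup T := by
      intro S T hS hT hST
      apply csSup_le hS
      intro a ha
      by_contra hc
      push_neg at hc
      have h1 : a - (a - sSup T) / 2 ∈ T := hST a ha _ (by linarith)
      have h2 := le_csSup hT h1
      linarith
    have h1 := key A B hA hB' hAB
    have h2 := key B A hB h hBA
    linarith
  · have h' : ¬ BddAbove B := by
      rintro ⟨M, hM⟩
      apply h
      refine ⟨M + 1, fun a ha => ?_⟩
      have := hM (hAB a ha 1 one_pos)
      linarith
    rw [Real.sSup_of_not_bddAbove h, Real.sSup_of_not_bddAbove h']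

end RepAux

theorem stmt_1 {α : Type*} [Finite α] (c : List α) (x : ℕ → α) :
    repE (prepend c x) = repE x := by
  classical
  set L := c.length with hL
  set y := prepend c x with hy
  unfold repE
  rw [Filter.liminf_eq, Filter.liminf_eq]
  apply RepAux.sSup_eq_of_close
  · refine ⟨1, ?_⟩
    rw [Set.mem_setOf_eq, Filter.eventually_atTop]
    refine ⟨1, fun n hn => ?_⟩
    have h1 := RepAux.rFn_ge y n
    have hn0 : (0 : ℝ) < n := by exact_mod_cast hn
    rw [le_div_iff₀ hn0, one_mul]
    exact_mod_cast by omega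
  · refine ⟨1, ?_⟩
    rw [Set.mem_setOf_eq, Filter.eventually_atTop]
    refine ⟨1, fun n hn => ?_⟩
    have h1 := RepAux.rFn_ge x n
    have hn0 : (0 : ℝ) < n := by exact_mod_cast hn
    rw [le_div_iff₀ hn0, one_mul]
    exact_mod_cast by omega
  · -- from set for y to set for x
    intro a ha ε hε
    rw [Set.mem_setOf_eq, Filter.eventually_atTop] at ha ⊢
    obtain ⟨N, hN⟩ := ha
    obtain ⟨N1, hN1⟩ := exists_nat_ge ((L : ℝ) / ε)
    refine ⟨N + N1 + 1, fun n hn => ?_⟩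
    have h1 : a ≤ (rFn y n : ℝ) / n := hN n (by omega)
    have hn0 : (0 : ℝ) < n := by exact_mod_cast (by omega : 0 < n)
    rw [le_div_iff₀ hn0] at h1
    have h3 : (rFn y n : ℝ) ≤ (rFn x n : ℝ) + L := by
      exact_mod_cast RepAux.rFn_prepend_le c x n
    have h6 : (N1 : ℝ) ≤ n := by exact_mod_cast (by omega : N1 ≤ n)
    rw [div_le_iff₀ hε] at hN1
    have h4 : (L : ℝ) ≤ ε * n := by nlinarith
    rw [le_div_iff₀ hn0]
    nlinarith
  · -- from set for x to set for y
    intro a ha ε hε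
    rw [Set.mem_setOf_eq, Filter.eventually_atTop] at ha ⊢
    obtain ⟨N, hN⟩ := ha
    obtain ⟨N1, hN1⟩ := exists_nat_ge ((a * L - L) / ε)
    refine ⟨N + N1 + L + 1, fun n hn => ?_⟩
    have hLn : L ≤ n := by omega
    have h1 : a ≤ (rFn x (n - L) : ℝ) / (n - L : ℕ) := hN (n - L) (by omega)
    have hm0 : (0 : ℝ) < ((n - L : ℕ) : ℝ) := by
      exact_mod_cast (by omega : 0 < n - L)
    rw [le_div_iff₀ hm0] at h1
    have hcast : ((n - L : ℕ) : ℝ) = (n : ℝ) - L := by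
      push_cast [Nat.cast_sub hLn]; ring
    rw [hcast] at h1
    have h3 : (rFn x (n - L) : ℝ) + L ≤ (rFn y n : ℝ) := by
      exact_mod_cast RepAux.rFn_prepend_ge c x n hLn
    have h6 : (N1 : ℝ) ≤ n := by exact_mod_cast (by omega : N1 ≤ n)
    rw [div_le_iff₀ hε] at hN1
    have h4 : a * L - L ≤ ε * n := by nlinarith
    have hn0 : (0 : ℝ) < n := by exact_mod_cast (by omega : 0 < n)
    rw [le_div_iff₀ hn0]
    nlinarith
end

section
/- For the standard words M_k of an irrational slope θ, for every k ≥ 1 the words M_k M_{k−1} and M_{k−1} M_k agree except in their last two letters; moreover the last two letters of M_k M_{k−1} are 01 if and only if the last two letters of M_{k−1} M_k are 10. -/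
/-- The standard words of slope `θ = [0; a 1, a 2, …]` over the alphabet `Fin 2`. -/
def stdWord (a : ℕ → ℕ) : ℕ → List (Fin 2)
  | 0 => [0]
  | 1 => List.replicate (a 1 - 1) 0 ++ [1]
  | (k + 2) => (List.replicate (a (k + 2)) (stdWord a (k + 1))).flatten ++ stdWord a k

/-- The alternating final pair. -/
def endPair (k : ℕ) : List (Fin 2) := if k % 2 = 0 then [1, 0] else [0, 1]

lemma endPair_length (k : ℕ) : (endPair k).length = 2 := by
  unfold endPair; split <;> rfl

lemma endPair_add_two (k : ℕ) : endPair (k + 2) = endPair k := by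
  simp [endPair, Nat.add_mod]

lemma cons_flatten_replicate (l : List (Fin 2)) (n : ℕ) :
    l ++ (List.replicate n l).flatten = (List.replicate n l).flatten ++ l := by
  induction n with
  | zero => simp
  | succ n ih =>
    simp only [List.replicate_succ, List.flatten_cons]
    rw [List.append_assoc, ih, ← List.append_assoc]

lemma key (a : ℕ → ℕ) : ∀ k, ∃ w : List (Fin 2),
    stdWord a (k + 1) ++ stdWord a k = w ++ endPair k ∧
    stdWord a k ++ stdWord a (k + 1) = w ++ endPair (k + 1) := by
  intro k
  induction k with
  | zero =>
    refine ⟨List.replicate (a 1 - 1) 0, ?_, ?_⟩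
    · simp [stdWord, endPair]
    · show [0] ++ (List.replicate (a 1 - 1) 0 ++ [1]) = _
      rw [← List.append_assoc]
      have : ([0] : List (Fin 2)) ++ List.replicate (a 1 - 1) 0
          = List.replicate (a 1 - 1) 0 ++ [0] := by
        simp [← List.replicate_succ, ← List.replicate_succ']
      rw [this, endPair]
      simp
  | succ k ih =>
    obtain ⟨w, h1, h2⟩ := ih
    refine ⟨(List.replicate (a (k + 2)) (stdWord a (k + 1))).flatten ++ w, ?_, ?_⟩
    · show ((List.replicate (a (k + 2)) (stdWord a (k + 1))).flatten ++ stdWord a k)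
          ++ stdWord a (k + 1) = _
      rw [List.append_assoc, h2, List.append_assoc]
    · show stdWord a (k + 1) ++
          ((List.replicate (a (k + 2)) (stdWord a (k + 1))).flatten ++ stdWord a k) = _
      rw [← List.append_assoc, cons_flatten_replicate, List.append_assoc, h1,
        ← List.append_assoc, endPair_add_two]

theorem stmt_3 (a : ℕ → ℕ) (ha : ∀ i, 1 ≤ i → 1 ≤ a i) (k : ℕ) (hk : 1 ≤ k) :
    ((stdWord a k ++ stdWord a (k - 1)).take
        ((stdWord a k).length + (stdWord a (k - 1)).length - 2) =
      (stdWord a (k - 1) ++ stdWord a k).take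
        ((stdWord a k).length + (stdWord a (k - 1)).length - 2)) ∧
    ((stdWord a k ++ stdWord a (k - 1)).drop
        ((stdWord a k).length + (stdWord a (k - 1)).length - 2) = [0, 1] ↔
      (stdWord a (k - 1) ++ stdWord a k).drop
        ((stdWord a k).length + (stdWord a (k - 1)).length - 2) = [1, 0]) := by
  obtain ⟨m, rfl⟩ : ∃ m, k = m + 1 := ⟨k - 1, (Nat.succ_pred_eq_of_pos hk).symm⟩
  simp only [Nat.add_sub_cancel]
  obtain ⟨w, h1, h2⟩ := key a m
  have hlen : (stdWord a (m + 1)).length + (stdWord a m).length - 2 = w.length := by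
    have := congrArg List.length h1
    simp only [List.length_append, endPair_length] at this
    omega
  rw [hlen, h1, h2]
  simp only [List.take_left, List.drop_left]
  refine ⟨trivial, ?_⟩
  rcases Nat.mod_two_eq_zero_or_one m with h | h <;>
    simp [endPair, h, Nat.add_mod] <;> decide
end

section
/- Let x be an infinite word with r(n, x) ≤ 2n + 1 for all n ≥ 1, and let Λ(x) = { n : r(n, x) = 2n + 1 } = {n₁ < n₂ < …} be infinite. Suppose r(n, x) = r(n−1, x) + 1 whenever n ∉ Λ(x). Then rep(x) = liminf_{i→∞} (1 + n_i / n_{i+1}). -/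
theorem stmt_4 {α : Type*} [Finite α] (x : ℕ → α) (e : ℕ → ℕ)
    (hbound : ∀ n, 1 ≤ n → rFn x n ≤ 2 * n + 1)
    (hmono : StrictMono e) (he1 : ∀ i, 1 ≤ e i)
    (heΛ : ∀ i, rFn x (e i) = 2 * e i + 1)
    (hΛe : ∀ n, 1 ≤ n → rFn x n = 2 * n + 1 → ∃ i, e i = n)
    (hstep : ∀ n, 1 ≤ n → rFn x n ≠ 2 * n + 1 → rFn x n = rFn x (n - 1) + 1) :
    Filter.liminf (fun n => (rFn x n : ℝ) / n) Filter.atTop =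
      Filter.liminf (fun i => 1 + (e i : ℝ) / (e (i + 1))) Filter.atTop := by
  classical
  set A : ℕ → ℝ := fun n => (rFn x n : ℝ) / n with hA
  set B : ℕ → ℝ := fun i => 1 + (e i : ℝ) / (e (i + 1)) with hB
  clear_value A B
  have he_lt : ∀ i, e i < e (i + 1) := fun i => hmono (Nat.lt_succ_self i)
  have hgei : ∀ i, i ≤ e i := fun i => hmono.le_apply
  -- the value of rFn on each block [e i, e (i+1))
  have hform : ∀ i, ∀ n, e i ≤ n → n < e (i + 1) → rFn x n = n + e i + 1 := by
    intro i n hn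
    induction n, hn using Nat.le_induction with
    | base => intro _; rw [heΛ i]; ring
    | succ n hn ih =>
      intro hlt
      have h1 : rFn x n = n + e i + 1 := ih (lt_trans (Nat.lt_succ_self n) hlt)
      have hne : rFn x (n + 1) ≠ 2 * (n + 1) + 1 := by
        intro h
        obtain ⟨j, hj⟩ := hΛe (n + 1) (by omega) h
        rcases le_or_gt j i with hji | hij
        · have := hmono.monotone hji; omega
        · have : e (i + 1) ≤ e j := hmono.monotone hij
          omega
      have h2 := hstep (n + 1) (by omega) hne
      simp only [Nat.add_sub_cancel] at h2
      omega
  -- every large n belongs to a block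
  have hblock : ∀ n, e 0 ≤ n → ∃ i, e i ≤ n ∧ n < e (i + 1) := by
    intro n hn
    set i := Nat.findGreatest (fun i => e i ≤ n) n with hi
    have hspec : e i ≤ n := Nat.findGreatest_spec (P := fun j => e j ≤ n) (Nat.zero_le n) hn
    refine ⟨i, hspec, ?_⟩
    by_contra hcon
    push_neg at hcon
    have : i + 1 ≤ i := Nat.le_findGreatest (by have := hgei (i + 1); omega) hcon
    omega
  -- boundedness facts
  have hA_ge : ∀ᶠ n in Filter.atTop, (1 : ℝ) ≤ A n := by
    filter_upwards [Filter.eventually_ge_atTop (e 0)] with n hn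
    obtain ⟨i, h₁, h₂⟩ := hblock n hn
    have hrn := hform i n h₁ h₂
    have hn1 : (1 : ℕ) ≤ n := le_trans (he1 0) hn
    have hnp : (0 : ℝ) < (n : ℝ) := by exact_mod_cast hn1
    simp only [hA]
    rw [hrn, le_div_iff₀ hnp]
    push_cast
    linarith
  have hA_le : ∀ᶠ n in Filter.atTop, A n ≤ 3 := by
    filter_upwards [Filter.eventually_ge_atTop 1] with n hn
    have hnp : (0 : ℝ) < (n : ℝ) := by exact_mod_cast hn
    simp only [hA]
    rw [div_le_iff₀ hnp]
    have := hbound n hn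
    push_cast
    have : (rFn x n : ℝ) ≤ 2 * n + 1 := by exact_mod_cast this
    have hn' : (1 : ℝ) ≤ (n : ℝ) := by exact_mod_cast hn
    linarith
  have hB_ge : ∀ i, (1 : ℝ) ≤ B i := by
    intro i
    have : (0 : ℝ) ≤ (e i : ℝ) / (e (i + 1) : ℝ) := by positivity
    simp only [hB]; linarith
  have hB_le : ∀ i, B i ≤ 2 := by
    intro i
    have hp : (0 : ℝ) < (e (i + 1) : ℝ) := by exact_mod_cast (he1 (i + 1))
    have : (e i : ℝ) / (e (i + 1) : ℝ) ≤ 1 := by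
      rw [div_le_one hp]; exact_mod_cast (he_lt i).le
    simp only [hB]; linarith
  have hbddA : Filter.IsBoundedUnder (· ≥ ·) Filter.atTop A := ⟨1, by simpa using hA_ge⟩
  have hcobA : Filter.IsCoboundedUnder (· ≥ ·) Filter.atTop A :=
    Filter.IsBoundedUnder.isCoboundedUnder_ge ⟨3, by simpa using hA_le⟩
  have hbddB : Filter.IsBoundedUnder (· ≥ ·) Filter.atTop B :=
    Filter.isBoundedUnder_of ⟨1, hB_ge⟩
  have hcobB : Filter.IsCoboundedUnder (· ≥ ·) Filter.atTop B :=
    Filter.IsBoundedUnder.isCoboundedUnder_ge (Filter.isBoundedUnder_of ⟨2, hB_le⟩)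
  apply le_antisymm
  · -- liminf A ≤ liminf B
    apply le_of_forall_lt
    intro c hc
    obtain ⟨ε, hεpos, h2⟩ : ∃ ε : ℝ, 0 < ε ∧ c + 2 * ε < Filter.liminf A Filter.atTop :=
      ⟨(Filter.liminf A Filter.atTop - c) / 3, by linarith, by linarith⟩
    have hev : ∀ᶠ n in Filter.atTop, c + 2 * ε < A n :=
      Filter.eventually_lt_of_lt_liminf h2 hbddA
    obtain ⟨N, hN⟩ := Filter.eventually_atTop.1 hev
    -- choose I large: for i ≥ I, e (i+1) - 1 ≥ N and 2/(e(i+1)-1) ≤ ε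
    obtain ⟨M, hM⟩ := exists_nat_ge (2 / ε)
    have key : ∀ i ≥ max N M, c + ε < B i := by
      intro i hi
      have hiN : N ≤ i := le_trans (le_max_left _ _) hi
      have hiM : M ≤ i := le_trans (le_max_right _ _) hi
      set m := e (i + 1) - 1 with hm
      clear_value m
      have hei1 : i + 1 ≤ e (i + 1) := hgei (i + 1)
      have hm_lt : m < e (i + 1) := by omega
      have hm_ge : e i ≤ m := by have := he_lt i; omega
      have hmN : N ≤ m := by omega
      have hrm := hform i m hm_ge hm_lt
      have hAm := hN m hmN
      -- real facts
      have hmpos : (0 : ℝ) < (m : ℝ) := by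
        have : 1 ≤ m := by have := he1 i; omega
        exact_mod_cast this
      have hbpos : (0 : ℝ) < (e (i + 1) : ℝ) := by exact_mod_cast he1 (i + 1)
      have hmreal : (m : ℝ) = (e (i + 1) : ℝ) - 1 := by
        have h' : m + 1 = e (i + 1) := by omega
        have h'' : (m : ℝ) + 1 = (e (i + 1) : ℝ) := by exact_mod_cast h'
        linarith
      have hAm_val : A m = 1 + ((e i : ℝ) + 1) / m := by
        simp only [hA]
        rw [hrm]
        push_cast
        field_simp
        ring
      -- B i ≥ A m - 2/m
      have hdiff : A m - 2 / (m : ℝ) ≤ B i := by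
        rw [hAm_val]
        simp only [hB]
        have hab : (e i : ℝ) + 1 ≤ (e (i + 1) : ℝ) := by exact_mod_cast he_lt i
        have h3 : ((e i : ℝ) + 1) / m - 2 / m = ((e i : ℝ) - 1) / m := by ring
        have h4 : ((e i : ℝ) - 1) / m ≤ (e i : ℝ) / (e (i + 1) : ℝ) := by
          rw [div_le_div_iff₀ hmpos hbpos, hmreal]
          nlinarith [Nat.cast_nonneg (α := ℝ) (e i)]
        linarith
      -- 2/m ≤ ε
      have h2m : 2 / (m : ℝ) ≤ ε := by
        have hMm : (M : ℝ) ≤ (m : ℝ) := by exact_mod_cast (by omega : M ≤ m)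
        have h2ε : 2 / ε ≤ (m : ℝ) := le_trans hM hMm
        rw [div_le_iff₀ hmpos]
        calc (2 : ℝ) = ε * (2 / ε) := by field_simp
        _ ≤ ε * m := by apply mul_le_mul_of_nonneg_left h2ε (le_of_lt hεpos)
      linarith [hAm, hdiff, h2m]
    have : c + ε ≤ Filter.liminf B Filter.atTop :=
      Filter.le_liminf_of_le hcobB (Filter.eventually_atTop.2 ⟨max N M, fun i hi => (key i hi).le⟩)
    linarith
  · -- liminf B ≤ liminf A
    apply le_of_forall_lt
    intro c hc
    obtain ⟨c', hcc', hc'L⟩ : ∃ c' : ℝ, c < c' ∧ c' < Filter.liminf B Filter.atTop :=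
      ⟨(c + Filter.liminf B Filter.atTop) / 2, by linarith, by linarith⟩
    have hev : ∀ᶠ i in Filter.atTop, c' < B i :=
      Filter.eventually_lt_of_lt_liminf hc'L hbddB
    obtain ⟨I, hI⟩ := Filter.eventually_atTop.1 hev
    have key : ∀ n ≥ e I, c' ≤ A n := by
      intro n hn
      have hn0 : e 0 ≤ n := le_trans (hmono.monotone (Nat.zero_le I)) hn
      obtain ⟨i, h₁, h₂⟩ := hblock n hn0
      have hiI : I ≤ i := by
        by_contra hcon
        push_neg at hcon
        have : e (i + 1) ≤ e I := hmono.monotone (by omega)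
        omega
      have hrn := hform i n h₁ h₂
      have hn1 : (1 : ℕ) ≤ n := le_trans (he1 0) hn0
      have hnp : (0 : ℝ) < (n : ℝ) := by exact_mod_cast hn1
      have hbpos : (0 : ℝ) < (e (i + 1) : ℝ) := by exact_mod_cast he1 (i + 1)
      have hBA : B i ≤ A n := by
        simp only [hA, hB]
        rw [hrn]
        push_cast
        have hfrac : (e i : ℝ) / (e (i + 1) : ℝ) ≤ ((e i : ℝ) + 1) / n := by
          rw [div_le_div_iff₀ hbpos hnp]
          have hnat : e i * n ≤ (e i + 1) * e (i + 1) := by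
            calc e i * n ≤ e i * e (i + 1) := Nat.mul_le_mul_left _ (le_of_lt h₂)
            _ ≤ (e i + 1) * e (i + 1) := Nat.mul_le_mul_right _ (by omega)
          exact_mod_cast hnat
        have : ((n : ℝ) + (e i : ℝ) + 1) / n = 1 + ((e i : ℝ) + 1) / n := by
          field_simp
          ring
        rw [this]
        linarith
      exact le_trans (hI i hiI).le hBA
    have : c' ≤ Filter.liminf A Filter.atTop :=
      Filter.le_liminf_of_le hcobA (Filter.eventually_atTop.2 ⟨e I, key⟩)
    linarith
end
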